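/- arXiv:1703.06830 — 3 statements merged into one kernel-verified Lean document; each statement's English description precedes it below -/
import Mathlib

section
/- For every γ ≥ −1/2, setting k = ⌊γ + 1/2⌋, there exist an even entire function ω : ℂ → ℂ of exponential type 2 (i.e., for every ε > 0 there is c_ε with |ω(z)| ≤ c_ε e^{(2+ε)|z|} for all z ∈ ℂ) which is real-valued and nonnegative on [0,∞), and constants 0 < c_1 ≤ c_2, such that c_1 x^{2k+2} ≤ ω(x) ≤ c_2 x^{2k+2} for all 0 ≤ x ≤ 1 and c_1 x^{2γ+1} ≤ ω(x) ≤ c_2 x^{2γ+1} for all x ≥ 1. -/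
/-!
Write `2γ + 1 = 2k + s` with `0 ≤ s < 2` and take `ω(z) = z^{2k} H_α(z)`, where
`H_α(z) = ∫₀¹ sin²(tz) t^α dt` with `α > -3`. For `0 ≤ t ≤ 1` we have `|sin(tz)| ≤ t|z|e^{|z|}`,
so the integrand is dominated by `t^{α+2}`: `H_α` is entire (differentiation under the integral
sign), even, and `|H_α(z)| ≲ |z|² e^{2|z|}`, which gives exponential type `2`.

On the real axis `sin²(tx) ≍ (tx)²` as long as `tx ≤ 1`, which gives `H_α(x) ≍ x²` on `[0, 1]`.
For `x ≥ 1` and `s > 0` take `α = -1 - s`: the part of the integral over `[0, 1/x]` is `≍ x^s`,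
and the part over `[1/x, 1]` is at most `∫_{1/x}^1 t^{-1-s} dt ≤ x^s / s`. For `s = 0` take `α = 0`,
where `H_0(x) = 1/2 - sin x cos x / (2x)` is bounded above and below for `x ≥ 1`.
-/

noncomputable section

namespace Stmt16

open MeasureTheory intervalIntegral Set Filter
open scoped Interval

lemma norm_cos_le_exp_norm (w : ℂ) : ‖Complex.cos w‖ ≤ Real.exp ‖w‖ := by
  have hexp : ∀ u : ℂ, ‖u‖ = ‖w‖ → ‖Complex.exp u‖ ≤ Real.exp ‖w‖ := fun u hu =>
    hu ▸ Complex.norm_exp_le_exp_norm u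
  calc ‖Complex.cos w‖
      = ‖Complex.exp (w * Complex.I) + Complex.exp (-w * Complex.I)‖ / 2 := by
        rw [Complex.cos, norm_div, Complex.norm_two]
    _ ≤ (‖Complex.exp (w * Complex.I)‖ + ‖Complex.exp (-w * Complex.I)‖) / 2 := by
        gcongr; exact norm_add_le _ _
    _ ≤ (Real.exp ‖w‖ + Real.exp ‖w‖) / 2 := by
        gcongr
        exacts [hexp _ (by simp), hexp _ (by simp)]
    _ = Real.exp ‖w‖ := by ring

lemma norm_sin_le_mul_exp_norm (w : ℂ) : ‖Complex.sin w‖ ≤ ‖w‖ * Real.exp ‖w‖ := by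
  have := (convex_closedBall (0 : ℂ) ‖w‖).norm_image_sub_le_of_norm_deriv_le
    (fun _ _ => Complex.differentiableAt_sin)
    (fun u hu => (Complex.deriv_sin ▸ norm_cos_le_exp_norm u).trans
      (Real.exp_le_exp.2 (mem_closedBall_zero_iff.1 hu)))
    (Metric.mem_closedBall_self (norm_nonneg w)) (mem_closedBall_zero_iff.2 le_rfl : w ∈ _)
  simpa [mul_comm] using this

lemma norm_sin_ofReal_mul_le (z : ℂ) {t : ℝ} (ht0 : 0 ≤ t) (ht1 : t ≤ 1) :
    ‖Complex.sin (t * z)‖ ≤ t * (‖z‖ * Real.exp ‖z‖) := by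
  have htz : ‖(t : ℂ) * z‖ = t * ‖z‖ := by simp [abs_of_nonneg ht0]
  calc ‖Complex.sin (t * z)‖ ≤ t * ‖z‖ * Real.exp (t * ‖z‖) :=
        htz ▸ norm_sin_le_mul_exp_norm _
    _ ≤ t * ‖z‖ * Real.exp ‖z‖ := by
        gcongr; exact mul_le_of_le_one_left (norm_nonneg z) ht1
    _ = t * (‖z‖ * Real.exp ‖z‖) := by ring

lemma sq_half_le_sin_sq {u : ℝ} (hu0 : 0 ≤ u) (hu1 : u ≤ 1) : (u / 2) ^ 2 ≤ Real.sin u ^ 2 := by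
  have hjordan := Real.mul_le_sin hu0 (by linarith [Real.pi_gt_three])
  have hπ : u / 2 ≤ 2 / Real.pi * u := by
    rw [div_mul_eq_mul_div, le_div_iff₀ Real.pi_pos]
    nlinarith [Real.pi_le_four]
  exact pow_le_pow_left₀ (by positivity) (hπ.trans hjordan) 2

lemma sq_mul_inv_rpow_two_sub {x : ℝ} (hx : 0 < x) (s : ℝ) : x ^ 2 * x⁻¹ ^ (2 - s) = x ^ s := by
  rw [Real.inv_rpow hx.le, Real.rpow_sub hx, Real.rpow_two]
  field_simp

lemma exists_norm_le_mul_exp_of_norm_le_pow_mul_exp {E F : Type*} [SeminormedAddCommGroup E]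
    [SeminormedAddCommGroup F] {f : E → F} {A τ ε : ℝ} {m : ℕ} (hA : 0 ≤ A) (hε : 0 < ε)
    (hf : ∀ z, ‖f z‖ ≤ A * ‖z‖ ^ m * Real.exp (τ * ‖z‖)) :
    ∃ c, ∀ z, ‖f z‖ ≤ c * Real.exp ((τ + ε) * ‖z‖) := by
  refine ⟨A * (m.factorial / ε ^ m), fun z => (hf z).trans ?_⟩
  have hpow : ‖z‖ ^ m ≤ m.factorial / ε ^ m * Real.exp (ε * ‖z‖) := by
    have := Real.pow_div_factorial_le_exp (ε * ‖z‖) (by positivity) m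
    rw [mul_pow, div_le_iff₀ (by positivity)] at this
    rw [div_mul_eq_mul_div, le_div_iff₀ (by positivity)]
    linarith
  calc A * ‖z‖ ^ m * Real.exp (τ * ‖z‖)
      ≤ A * (m.factorial / ε ^ m * Real.exp (ε * ‖z‖)) * Real.exp (τ * ‖z‖) := by gcongr
    _ = A * (m.factorial / ε ^ m) * Real.exp ((τ + ε) * ‖z‖) := by
        rw [add_mul, Real.exp_add]; ring

lemma intervalIntegrable_of_norm_le_rpow {E : Type*} [NormedAddCommGroup E] {f : ℝ → E}
    {a b p C : ℝ} (hf : AEStronglyMeasurable f (volume.restrict (Ι a b))) (hp : -1 < p)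
    (hle : ∀ t ∈ Ι a b, ‖f t‖ ≤ C * t ^ p) : IntervalIntegrable f volume a b :=
  ((intervalIntegral.intervalIntegrable_rpow' hp).const_mul C).mono_fun' hf
    ((ae_restrict_iff' measurableSet_uIoc).2 (Eventually.of_forall hle))

lemma integral_rpow_from_zero {r : ℝ} (hr : -1 < r) (b : ℝ) :
    ∫ t in (0 : ℝ)..b, t ^ r = b ^ (r + 1) / (r + 1) := by
  rw [integral_rpow (Or.inl hr), Real.zero_rpow (by linarith), sub_zero]

def sinSqIntegral (α : ℝ) (z : ℂ) : ℂ :=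
  ∫ t in (0 : ℝ)..1, Complex.sin (t * z) ^ 2 * ((t ^ α : ℝ) : ℂ)

lemma measurable_sin_sq_mul_rpow (α : ℝ) (z : ℂ) :
    Measurable fun t : ℝ => Complex.sin (t * z) ^ 2 * ((t ^ α : ℝ) : ℂ) := by
  fun_prop

lemma norm_sin_sq_mul_rpow_le (α : ℝ) (z : ℂ) {t : ℝ} (ht : t ∈ Ioc (0 : ℝ) 1) :
    ‖Complex.sin (t * z) ^ 2 * ((t ^ α : ℝ) : ℂ)‖ ≤ (‖z‖ * Real.exp ‖z‖) ^ 2 * t ^ (α + 2) := by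
  obtain ⟨ht0, ht1⟩ := ht
  have hsin := norm_sin_ofReal_mul_le z ht0.le ht1
  have htα := Real.rpow_nonneg ht0.le α
  rw [norm_mul, norm_pow, Complex.norm_real, Real.norm_of_nonneg htα, Real.rpow_add ht0,
    Real.rpow_two]
  calc ‖Complex.sin (t * z)‖ ^ 2 * t ^ α ≤ (t * (‖z‖ * Real.exp ‖z‖)) ^ 2 * t ^ α := by gcongr
    _ = _ := by ring

lemma intervalIntegrable_sin_sq_mul_rpow {α : ℝ} (hα : -3 < α) (z : ℂ) :
    IntervalIntegrable (fun t : ℝ => Complex.sin (t * z) ^ 2 * ((t ^ α : ℝ) : ℂ)) volume 0 1 :=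
  intervalIntegrable_of_norm_le_rpow (measurable_sin_sq_mul_rpow α z).aestronglyMeasurable
    (by linarith) fun _ ht => norm_sin_sq_mul_rpow_le α z (by rwa [uIoc_of_le zero_le_one] at ht)

lemma norm_sinSqIntegral_le {α : ℝ} (hα : -3 < α) (z : ℂ) :
    ‖sinSqIntegral α z‖ ≤ (‖z‖ * Real.exp ‖z‖) ^ 2 / (α + 3) := by
  have hle := norm_integral_le_of_norm_le zero_le_one
    (Eventually.of_forall fun t ht => norm_sin_sq_mul_rpow_le α z ht)
    ((intervalIntegral.intervalIntegrable_rpow' (by linarith)).const_mul _)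
  rwa [intervalIntegral.integral_const_mul, integral_rpow_from_zero (by linarith),
    Real.one_rpow, show α + 2 + 1 = α + 3 by ring, ← div_eq_mul_one_div] at hle

lemma norm_pow_mul_sinSqIntegral_le {α : ℝ} (hα : -3 < α) (n : ℕ) (z : ℂ) :
    ‖z ^ n * sinSqIntegral α z‖ ≤ 1 / (α + 3) * ‖z‖ ^ (n + 2) * Real.exp (2 * ‖z‖) := by
  have : 0 < α + 3 := by linarith
  rw [norm_mul, norm_pow]
  calc ‖z‖ ^ n * ‖sinSqIntegral α z‖ ≤ ‖z‖ ^ n * ((‖z‖ * Real.exp ‖z‖) ^ 2 / (α + 3)) := by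
        gcongr; exact norm_sinSqIntegral_le hα z
    _ = 1 / (α + 3) * ‖z‖ ^ (n + 2) * Real.exp (2 * ‖z‖) := by
        rw [two_mul, Real.exp_add]; ring

lemma hasDerivAt_sin_sq_mul_rpow (α t : ℝ) (z : ℂ) :
    HasDerivAt (fun w : ℂ => Complex.sin (t * w) ^ 2 * ((t ^ α : ℝ) : ℂ))
      (t * Complex.sin (t * (2 * z)) * ((t ^ α : ℝ) : ℂ)) z := by
  refine ((((hasDerivAt_id z).const_mul (t : ℂ)).csin.pow 2).mul_const _).congr_deriv ?_
  rw [show (t : ℂ) * (2 * z) = 2 * (t * z) by ring, Complex.sin_two_mul]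
  simp only [id, mul_one, Nat.cast_ofNat]
  ring

lemma norm_deriv_sin_sq_mul_rpow_le (α : ℝ) {z : ℂ} {R : ℝ} (hz : ‖z‖ ≤ R) {t : ℝ}
    (ht : t ∈ Ioc (0 : ℝ) 1) :
    ‖t * Complex.sin (t * (2 * z)) * ((t ^ α : ℝ) : ℂ)‖ ≤
      2 * R * Real.exp (2 * R) * t ^ (α + 2) := by
  obtain ⟨ht0, ht1⟩ := ht
  have h2z : ‖2 * z‖ ≤ 2 * R := by rw [norm_mul, Complex.norm_two]; linarith
  have hR : 0 ≤ R := (norm_nonneg z).trans hz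
  have htα := Real.rpow_nonneg ht0.le α
  rw [norm_mul, norm_mul, Complex.norm_real, Complex.norm_real, Real.norm_of_nonneg ht0.le,
    Real.norm_of_nonneg htα, Real.rpow_add ht0, Real.rpow_two]
  have hsin : ‖Complex.sin (t * (2 * z))‖ ≤ t * (2 * R * Real.exp (2 * R)) :=
    (norm_sin_ofReal_mul_le (2 * z) ht0.le ht1).trans (by gcongr)
  calc t * ‖Complex.sin (t * (2 * z))‖ * t ^ α
      ≤ t * (t * (2 * R * Real.exp (2 * R))) * t ^ α := by gcongr
    _ = _ := by ring

lemma differentiable_sinSqIntegral {α : ℝ} (hα : -3 < α) : Differentiable ℂ (sinSqIntegral α) :=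
  fun z₀ => (hasDerivAt_integral_of_dominated_loc_of_deriv_le
    (F' := fun z t => t * Complex.sin (t * (2 * z)) * ((t ^ α : ℝ) : ℂ))
    (Metric.ball_mem_nhds z₀ one_pos)
    (Eventually.of_forall fun z => (measurable_sin_sq_mul_rpow α z).aestronglyMeasurable)
    (intervalIntegrable_sin_sq_mul_rpow hα z₀) (Measurable.aestronglyMeasurable (by fun_prop))
    (Eventually.of_forall fun t ht z hz => norm_deriv_sin_sq_mul_rpow_le α
      (by linarith [norm_sub_norm_le z z₀, mem_ball_iff_norm.1 hz] : ‖z‖ ≤ ‖z₀‖ + 1)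
      (by rwa [uIoc_of_le zero_le_one] at ht))
    ((intervalIntegral.intervalIntegrable_rpow' (by linarith)).const_mul _)
    (Eventually.of_forall fun t _ z _ => hasDerivAt_sin_sq_mul_rpow α t z)).2.differentiableAt

lemma sinSqIntegral_neg (α : ℝ) (z : ℂ) : sinSqIntegral α (-z) = sinSqIntegral α z := by
  simp only [sinSqIntegral, mul_neg, Complex.sin_neg, neg_sq]

def sinSqIntegralReal (α x : ℝ) : ℝ := ∫ t in (0 : ℝ)..1, Real.sin (t * x) ^ 2 * t ^ α

lemma sinSqIntegral_ofReal (α x : ℝ) : sinSqIntegral α x = sinSqIntegralReal α x := by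
  rw [sinSqIntegral, sinSqIntegralReal, ← intervalIntegral.integral_ofReal]
  push_cast
  rfl

lemma ofReal_pow_mul_sinSqIntegral (α x : ℝ) (n : ℕ) :
    (x : ℂ) ^ n * sinSqIntegral α x = ((x ^ n * sinSqIntegralReal α x : ℝ) : ℂ) := by
  rw [sinSqIntegral_ofReal]
  push_cast
  ring

lemma sin_sq_mul_rpow_le_sq_mul_rpow (α x : ℝ) {t : ℝ} (ht : 0 ≤ t) :
    Real.sin (t * x) ^ 2 * t ^ α ≤ x ^ 2 * t ^ (α + 2) := by
  rcases ht.eq_or_lt with rfl | ht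
  · rw [zero_mul, Real.sin_zero, sq, zero_mul, zero_mul]
    positivity
  · rw [Real.rpow_add ht, Real.rpow_two]
    calc Real.sin (t * x) ^ 2 * t ^ α ≤ (t * x) ^ 2 * t ^ α :=
          mul_le_mul_of_nonneg_right Real.sin_sq_le_sq (Real.rpow_nonneg ht.le α)
      _ = x ^ 2 * (t ^ α * t ^ 2) := by ring

lemma intervalIntegrable_real_sin_sq_mul_rpow {α : ℝ} (hα : -3 < α) (x : ℝ) {a b : ℝ}
    (ha : 0 ≤ a) (hb : 0 ≤ b) :
    IntervalIntegrable (fun t => Real.sin (t * x) ^ 2 * t ^ α) volume a b :=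
  intervalIntegrable_of_norm_le_rpow (C := x ^ 2) (p := α + 2)
    (Measurable.aestronglyMeasurable (by fun_prop)) (by linarith) fun t ht => by
      have ht0 : 0 ≤ t := (le_min ha hb).trans ht.1.le
      rw [Real.norm_of_nonneg (by positivity)]
      exact sin_sq_mul_rpow_le_sq_mul_rpow α x ht0

lemma sinSqIntegralReal_nonneg (α x : ℝ) : 0 ≤ sinSqIntegralReal α x :=
  intervalIntegral.integral_nonneg zero_le_one fun t ht => by have := ht.1; positivity

lemma integral_sin_sq_mul_rpow_le {α : ℝ} (hα : -3 < α) (x : ℝ) {b : ℝ} (hb : 0 ≤ b) :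
    ∫ t in (0 : ℝ)..b, Real.sin (t * x) ^ 2 * t ^ α ≤ x ^ 2 * (b ^ (α + 3) / (α + 3)) :=
  calc ∫ t in (0 : ℝ)..b, Real.sin (t * x) ^ 2 * t ^ α
      ≤ ∫ t in (0 : ℝ)..b, x ^ 2 * t ^ (α + 2) :=
        integral_mono_on hb (intervalIntegrable_real_sin_sq_mul_rpow hα x le_rfl hb)
          ((intervalIntegral.intervalIntegrable_rpow' (by linarith)).const_mul _)
          fun t ht => sin_sq_mul_rpow_le_sq_mul_rpow α x ht.1
    _ = x ^ 2 * (b ^ (α + 3) / (α + 3)) := by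
        rw [intervalIntegral.integral_const_mul, integral_rpow_from_zero (by linarith),
          show α + 2 + 1 = α + 3 by ring]

lemma le_sinSqIntegralReal {α : ℝ} (hα : -3 < α) {x b : ℝ} (hx : 0 ≤ x) (hb0 : 0 < b)
    (hb1 : b ≤ 1) (hbx : b * x ≤ 1) :
    x ^ 2 * (b ^ (α + 3) / (α + 3)) / 4 ≤ sinSqIntegralReal α x :=
  calc x ^ 2 * (b ^ (α + 3) / (α + 3)) / 4 = ∫ t in (0 : ℝ)..b, x ^ 2 / 4 * t ^ (α + 2) := by
        rw [intervalIntegral.integral_const_mul, integral_rpow_from_zero (by linarith),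
          show α + 2 + 1 = α + 3 by ring]
        ring
    _ ≤ ∫ t in (0 : ℝ)..b, Real.sin (t * x) ^ 2 * t ^ α :=
        integral_mono_on_of_le_Ioo hb0.le
          ((intervalIntegral.intervalIntegrable_rpow' (by linarith)).const_mul _)
          (intervalIntegrable_real_sin_sq_mul_rpow hα x le_rfl hb0.le) fun t ⟨ht0, htb⟩ => by
            have htx : t * x ≤ 1 := (mul_le_mul_of_nonneg_right htb.le hx).trans hbx
            have := Real.rpow_nonneg ht0.le α
            calc x ^ 2 / 4 * t ^ (α + 2) = (t * x / 2) ^ 2 * t ^ α := by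
                  rw [Real.rpow_add ht0, Real.rpow_two]; ring
              _ ≤ Real.sin (t * x) ^ 2 * t ^ α :=
                  mul_le_mul_of_nonneg_right (sq_half_le_sin_sq (by positivity) htx) this
    _ ≤ sinSqIntegralReal α x :=
        integral_mono_interval le_rfl hb0.le hb1
          ((ae_restrict_iff' measurableSet_Ioc).2 (Eventually.of_forall fun t ht => by
            have := ht.1; positivity))
          (intervalIntegrable_real_sin_sq_mul_rpow hα x le_rfl zero_le_one)

lemma sinSqIntegralReal_bounds_of_le_one {α : ℝ} (hα : -3 < α) {x : ℝ} (hx0 : 0 ≤ x)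
    (hx1 : x ≤ 1) :
    1 / (4 * (α + 3)) * x ^ 2 ≤ sinSqIntegralReal α x ∧
      sinSqIntegralReal α x ≤ 1 / (α + 3) * x ^ 2 := by
  have hlow := le_sinSqIntegralReal hα hx0 one_pos le_rfl (by linarith)
  have hup : sinSqIntegralReal α x ≤ _ := integral_sin_sq_mul_rpow_le hα x zero_le_one
  rw [Real.one_rpow] at hlow hup
  have : α + 3 ≠ 0 := by linarith
  exact ⟨le_of_eq_of_le (by field_simp) hlow, le_of_le_of_eq hup (by ring)⟩

lemma le_sinSqIntegralReal_of_one_le {s : ℝ} (hs2 : s < 2) {x : ℝ} (hx : 1 ≤ x) :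
    1 / (4 * (2 - s)) * x ^ s ≤ sinSqIntegralReal (-1 - s) x := by
  have hx0 : 0 < x := one_pos.trans_le hx
  have h := le_sinSqIntegralReal (α := -1 - s) (by linarith) hx0.le (inv_pos.2 hx0)
    (inv_le_one_of_one_le₀ hx) (inv_mul_cancel₀ hx0.ne').le
  rw [show -1 - s + 3 = 2 - s by ring, ← mul_div_assoc, sq_mul_inv_rpow_two_sub hx0] at h
  exact le_of_eq_of_le (by field_simp) h

lemma sinSqIntegralReal_le_of_one_le {s : ℝ} (hs0 : 0 < s) (hs2 : s < 2) {x : ℝ} (hx : 1 ≤ x) :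
    sinSqIntegralReal (-1 - s) x ≤ (1 / (2 - s) + 1 / s) * x ^ s := by
  have hx0 : 0 < x := one_pos.trans_le hx
  have hb : x⁻¹ ≤ 1 := inv_le_one_of_one_le₀ hx
  have hb0 : 0 < x⁻¹ := inv_pos.2 hx0
  have hα : -3 < -1 - s := by linarith
  have hnear : ∫ t in (0 : ℝ)..x⁻¹, Real.sin (t * x) ^ 2 * t ^ (-1 - s) ≤ x ^ s / (2 - s) := by
    have h := integral_sin_sq_mul_rpow_le hα x hb0.le
    rwa [show -1 - s + 3 = 2 - s by ring, ← mul_div_assoc, sq_mul_inv_rpow_two_sub hx0] at h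
  have h0 : (0 : ℝ) ∉ [[x⁻¹, 1]] := by
    rw [uIcc_of_le hb]; exact fun h => hb0.not_ge h.1
  have hfar : ∫ t in x⁻¹..1, Real.sin (t * x) ^ 2 * t ^ (-1 - s) ≤ x ^ s / s :=
    calc ∫ t in x⁻¹..1, Real.sin (t * x) ^ 2 * t ^ (-1 - s)
        ≤ ∫ t in x⁻¹..1, t ^ (-1 - s) :=
          integral_mono_on hb (intervalIntegrable_real_sin_sq_mul_rpow hα x hb0.le zero_le_one)
            (intervalIntegral.intervalIntegrable_rpow (Or.inr h0)) fun t ht =>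
              mul_le_of_le_one_left (Real.rpow_nonneg (hb0.le.trans ht.1) _) (Real.sin_sq_le_one _)
      _ = (x ^ s - 1) / s := by
          rw [integral_rpow (Or.inr ⟨by linarith, h0⟩), show -1 - s + 1 = -s by ring,
            Real.one_rpow, Real.inv_rpow hx0.le, Real.rpow_neg hx0.le, inv_inv]
          field_simp
          ring
      _ ≤ x ^ s / s := by gcongr; linarith
  rw [sinSqIntegralReal, ← integral_add_adjacent_intervals
    (intervalIntegrable_real_sin_sq_mul_rpow hα x le_rfl hb0.le)
    (intervalIntegrable_real_sin_sq_mul_rpow hα x hb0.le zero_le_one)]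
  calc _ ≤ x ^ s / (2 - s) + x ^ s / s := add_le_add hnear hfar
    _ = (1 / (2 - s) + 1 / s) * x ^ s := by ring

lemma sinSqIntegralReal_zero_eq {x : ℝ} (hx : x ≠ 0) :
    sinSqIntegralReal 0 x = 1 / 2 - Real.sin x * Real.cos x / (2 * x) := by
  simp only [sinSqIntegralReal, Real.rpow_zero, mul_one]
  rw [intervalIntegral.integral_comp_mul_right (fun u => Real.sin u ^ 2) hx, integral_sin_sq]
  simp only [zero_mul, one_mul, Real.sin_zero, Real.cos_zero, smul_eq_mul]
  field_simp
  ring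

lemma sinSqIntegralReal_zero_bounds {x : ℝ} (hx : 1 ≤ x) :
    1 / 4 ≤ sinSqIntegralReal 0 x ∧ sinSqIntegralReal 0 x ≤ 3 / 4 := by
  have hx0 : 0 < x := one_pos.trans_le hx
  have hsc : |Real.sin x * Real.cos x| ≤ 1 / 2 := by
    rw [abs_le]
    constructor <;>
      nlinarith [Real.sin_two_mul x, Real.neg_one_le_sin (2 * x), Real.sin_le_one (2 * x)]
  have hrem : |Real.sin x * Real.cos x / (2 * x)| ≤ 1 / 4 := by
    rw [abs_div, abs_of_pos (by positivity : (0 : ℝ) < 2 * x), div_le_iff₀ (by positivity)]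
    linarith
  rw [sinSqIntegralReal_zero_eq hx0.ne']
  constructor <;> linarith [(abs_le.1 hrem).1, (abs_le.1 hrem).2]

lemma exists_sinSqIntegralReal_bounds {s : ℝ} (hs0 : 0 ≤ s) (hs2 : s < 2) :
    ∃ α, -3 < α ∧ ∃ c₁ c₂ : ℝ, 0 < c₁ ∧
      (∀ x, 0 ≤ x → x ≤ 1 →
        c₁ * x ^ 2 ≤ sinSqIntegralReal α x ∧ sinSqIntegralReal α x ≤ c₂ * x ^ 2) ∧
      (∀ x, 1 ≤ x →
        c₁ * x ^ s ≤ sinSqIntegralReal α x ∧ sinSqIntegralReal α x ≤ c₂ * x ^ s) := by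
  rcases hs0.eq_or_lt with rfl | hs0
  · refine ⟨0, by norm_num, 1 / 12, 1, by norm_num, fun x hx0 hx1 => ?_, fun x hx => ?_⟩
    · obtain ⟨hlow, hup⟩ := sinSqIntegralReal_bounds_of_le_one (α := 0) (by norm_num) hx0 hx1
      norm_num at hlow hup
      exact ⟨hlow, by nlinarith [sq_nonneg x]⟩
    · obtain ⟨hlow, hup⟩ := sinSqIntegralReal_zero_bounds hx
      rw [Real.rpow_zero]
      constructor <;> linarith
  · have h2s : 0 < 2 - s := by linarith
    refine ⟨-1 - s, by linarith, 1 / (4 * (2 - s)), 1 / (2 - s) + 1 / s, by positivity,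
      fun x hx0 hx1 => ?_, fun x hx =>
        ⟨le_sinSqIntegralReal_of_one_le hs2 hx, sinSqIntegralReal_le_of_one_le hs0 hs2 hx⟩⟩
    obtain ⟨hlow, hup⟩ := sinSqIntegralReal_bounds_of_le_one (α := -1 - s) (by linarith) hx0 hx1
    rw [show -1 - s + 3 = 2 - s by ring] at hlow hup
    exact ⟨hlow, hup.trans (by gcongr; linarith [one_div_pos.2 hs0])⟩

/-- for every `γ ≥ −1/2`, with `k = ⌊γ + 1/2⌋`, there exist an even entire
function `ω` on `ℂ` of exponential type `2`, real-valued and nonnegative on `[0,∞)`, and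
constants `0 < c₁ ≤ c₂` such that `ω(x) ≍ x^{2k+2}` for `0 ≤ x ≤ 1` and `ω(x) ≍ x^{2γ+1}` for
`x ≥ 1`. -/
theorem stmt16 (γ : ℝ) (hγ : -(1/2 : ℝ) ≤ γ) :
    ∃ (ω : ℂ → ℂ) (c₁ c₂ : ℝ), 0 < c₁ ∧ c₁ ≤ c₂ ∧
      AnalyticOnNhd ℂ ω Set.univ ∧
      (∀ z : ℂ, ω (-z) = ω z) ∧
      (∀ ε > (0 : ℝ), ∃ c : ℝ, ∀ z : ℂ, ‖ω z‖ ≤ c * Real.exp ((2 + ε) * ‖z‖)) ∧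
      (∀ x : ℝ, 0 ≤ x → (ω (x : ℂ)).im = 0 ∧ 0 ≤ (ω (x : ℂ)).re) ∧
      (∀ x : ℝ, 0 ≤ x → x ≤ 1 →
        c₁ * x ^ (2 * (⌊γ + 1/2⌋ : ℝ) + 2) ≤ (ω (x : ℂ)).re ∧
          (ω (x : ℂ)).re ≤ c₂ * x ^ (2 * (⌊γ + 1/2⌋ : ℝ) + 2)) ∧
      (∀ x : ℝ, 1 ≤ x →
        c₁ * x ^ (2 * γ + 1) ≤ (ω (x : ℂ)).re ∧ (ω (x : ℂ)).re ≤ c₂ * x ^ (2 * γ + 1)) := by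
  obtain ⟨k, hk⟩ : ∃ k : ℕ, (k : ℝ) = ⌊γ + 1/2⌋ :=
    ⟨_, by exact_mod_cast Int.toNat_of_nonneg (Int.floor_nonneg.2 (by linarith))⟩
  have hs0 : 0 ≤ 2 * γ + 1 - 2 * k := by linarith [Int.floor_le (γ + 1/2)]
  have hs2 : 2 * γ + 1 - 2 * k < 2 := by linarith [Int.lt_floor_add_one (γ + 1/2)]
  obtain ⟨α, hα, c₁, c₂, hc₁, hsmall, hlarge⟩ := exists_sinSqIntegralReal_bounds hs0 hs2
  have hc : c₁ ≤ c₂ := by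
    obtain ⟨hlow, hup⟩ := hlarge 1 le_rfl
    simp only [Real.one_rpow, mul_one] at hlow hup
    exact hlow.trans hup
  have scale : ∀ {p g f : ℝ}, 0 ≤ p → c₁ * g ≤ f ∧ f ≤ c₂ * g →
      c₁ * (p * g) ≤ p * f ∧ p * f ≤ c₂ * (p * g) := fun hp h => by
    rw [mul_left_comm c₁, mul_left_comm c₂]
    exact ⟨mul_le_mul_of_nonneg_left h.1 hp, mul_le_mul_of_nonneg_left h.2 hp⟩
  refine ⟨fun z => z ^ (2 * k) * sinSqIntegral α z, c₁, c₂, hc₁, hc,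
    Complex.analyticOnNhd_univ_iff_differentiable.2
      ((differentiable_id.pow _).mul (differentiable_sinSqIntegral hα)),
    fun z => by simp only [sinSqIntegral_neg, pow_mul, neg_sq],
    fun ε hε => exists_norm_le_mul_exp_of_norm_le_pow_mul_exp
      (one_div_nonneg.2 (by linarith)) hε (norm_pow_mul_sinSqIntegral_le hα _),
    fun x hx => ?_, fun x hx0 hx1 => ?_, fun x hx => ?_⟩ <;>
  simp only [ofReal_pow_mul_sinSqIntegral, Complex.ofReal_re, Complex.ofReal_im]
  · exact ⟨trivial, mul_nonneg (by positivity) (sinSqIntegralReal_nonneg α x)⟩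
  · rw [← hk, show 2 * (k : ℝ) + 2 = ((2 * k + 2 : ℕ) : ℝ) by push_cast; ring,
      Real.rpow_natCast, pow_add]
    exact scale (by positivity) (hsmall x hx0 hx1)
  · rw [show 2 * γ + 1 = ((2 * k : ℕ) : ℝ) + (2 * γ + 1 - 2 * k) by push_cast; ring,
      Real.rpow_add (one_pos.trans_le hx), Real.rpow_natCast]
    exact scale (by positivity) (hlarge x hx)

end Stmt16
end
end

section
/- Let m ∈ ℕ and let b^1,…,b^m ∈ ℝ^d∖{0} be vectors such that for every j = 1,…,m and i = 1,…,d either |b_i^j| ≥ 1 or b_i^j = 0. Then there exists a triangular sequence ρ^{(n)}, n ∈ ℤ^d, with values in ℤ^d∖{0} (i.e., ρ^{(n)} = (ρ_1(n_1), ρ_2(n_1,n_2),…,ρ_d(n_1,…,n_d)) with integer entries, each ρ_i(n_1,…,n_i) increasing in n_i for fixed n_1,…,n_{i−1}) such that |ρ_i(n_1,…,n_i) − n_i| ≤ m for all n ∈ ℤ^d and i = 1,…,d, and |⟨b^j, ρ^{(n)}⟩| ≥ 1/2 for all n ∈ ℤ^d and j = 1,…,m. -/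
open scoped NNReal ENNReal

noncomputable section

namespace Stmt17

/-- number of elements of `B` that are `≤ x`. -/
def rnk (B : Finset ℤ) (x : ℤ) : ℤ := ((B.filter (fun y => y ≤ x)).card : ℤ)

/-- the shift applied at `n` to skip over the bad set `B`. -/
def shf (B : Finset ℤ) (n : ℤ) : ℤ := ((B.filter (fun x => x - rnk B x < n)).card : ℤ)

/-- strictly increasing map `ℤ → ℤ` avoiding `B`, moving points by at most `B.card`. -/
def skipf (B : Finset ℤ) (n : ℤ) : ℤ := n + shf B n

lemma shf_nonneg (B : Finset ℤ) (n : ℤ) : 0 ≤ shf B n := Int.natCast_nonneg _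

lemma shf_le_card (B : Finset ℤ) (n : ℤ) : shf B n ≤ (B.card : ℤ) := by
  unfold shf
  exact_mod_cast Finset.card_le_card (Finset.filter_subset _ _)

lemma rnk_le_add (B : Finset ℤ) {x y : ℤ} (h : x ≤ y) : rnk B y ≤ rnk B x + (y - x) := by
  have hsub : B.filter (fun z => z ≤ y) ⊆ B.filter (fun z => z ≤ x) ∪ Finset.Ioc x y := by
    intro z hz
    simp only [Finset.mem_filter, Finset.mem_union, Finset.mem_Ioc] at hz ⊢
    rcases le_or_gt z x with h' | h'
    · exact Or.inl ⟨hz.1, h'⟩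
    · exact Or.inr ⟨h', hz.2⟩
  have h1 : (B.filter (fun z => z ≤ y)).card ≤ (B.filter (fun z => z ≤ x)).card + (Finset.Ioc x y).card :=
    le_trans (Finset.card_le_card hsub) (Finset.card_union_le _ _)
  have h2 : ((Finset.Ioc x y).card : ℤ) = y - x := by
    rw [Int.card_Ioc]; exact Int.toNat_of_nonneg (by omega)
  unfold rnk
  omega

lemma fB_mono (B : Finset ℤ) {x y : ℤ} (h : x ≤ y) : x - rnk B x ≤ y - rnk B y := by
  have := rnk_le_add B h; omega

lemma shf_mono (B : Finset ℤ) {a b : ℤ} (h : a ≤ b) : shf B a ≤ shf B b := by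
  unfold shf
  have hsub : B.filter (fun x => x - rnk B x < a) ⊆ B.filter (fun x => x - rnk B x < b) := by
    intro x hx
    simp only [Finset.mem_filter] at hx ⊢
    exact ⟨hx.1, lt_of_lt_of_le hx.2 h⟩
  exact_mod_cast Finset.card_le_card hsub

lemma skipf_strictMono (B : Finset ℤ) {a b : ℤ} (h : a < b) : skipf B a < skipf B b := by
  have := shf_mono B h.le; unfold skipf; omega

lemma skipf_not_mem (B : Finset ℤ) (n : ℤ) : skipf B n ∉ B := by
  intro hmem
  set x := skipf B n with hx
  set c := shf B n with hc
  have hxe : x = n + c := rfl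
  by_cases h1 : x - rnk B x < n
  · -- all elements ≤ x are in the low set
    have hsub : B.filter (fun y => y ≤ x) ⊆ B.filter (fun y => y - rnk B y < n) := by
      intro y hy
      simp only [Finset.mem_filter] at hy ⊢
      exact ⟨hy.1, lt_of_le_of_lt (fB_mono B hy.2) h1⟩
    have hr : rnk B x ≤ c := by
      unfold rnk; rw [hc]; unfold shf
      exact_mod_cast Finset.card_le_card hsub
    omega
  · push_neg at h1
    have hr : rnk B x ≤ c := by omega
    have hxnot : x ∉ B.filter (fun y => y - rnk B y < n) := by
      simp only [Finset.mem_filter]; intro hcon; omega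
    have hsub : insert x (B.filter (fun y => y - rnk B y < n)) ⊆ B.filter (fun y => y ≤ x) := by
      intro y hy
      rcases Finset.mem_insert.mp hy with rfl | hy
      · simp only [Finset.mem_filter]; exact ⟨hmem, le_refl _⟩
      · simp only [Finset.mem_filter] at hy ⊢
        refine ⟨hy.1, ?_⟩
        by_contra hcon
        push_neg at hcon
        have := fB_mono B hcon.le
        omega
    have hcard : (B.filter (fun y => y - rnk B y < n)).card + 1 ≤ (B.filter (fun y => y ≤ x)).card := by
      have := Finset.card_le_card hsub
      rwa [Finset.card_insert_of_notMem hxnot] at this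
    have : c + 1 ≤ rnk B x := by unfold rnk; rw [hc]; unfold shf; exact_mod_cast hcard
    omega


lemma skipf_def (B : Finset ℤ) (n : ℤ) : skipf B n = n + shf B n := rfl

variable {d m : ℕ}

/-- the largest index where `b j` is nonzero. -/
def lastIdx (hd : 0 < d) (b : Fin m → EuclideanSpace ℝ (Fin d)) (j : Fin m) : Fin d :=
  if h : (Finset.univ.filter fun i => b j i ≠ 0).Nonempty then Finset.max' _ h else ⟨0, hd⟩

/-- partial scalar product over coordinates `< i`. -/
def Ssum (b : Fin m → EuclideanSpace ℝ (Fin d)) (j : Fin m) (prev : Fin d → ℤ) (i : Fin d) : ℝ :=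
  ∑ i' ∈ Finset.Iio i, b j i' * (prev i' : ℝ)

/-- the bad set of integers for coordinate `i`, given the previous coordinates `prev`. -/
def Bad (hd : 0 < d) (b : Fin m → EuclideanSpace ℝ (Fin d)) (prev : Fin d → ℤ) (i : Fin d) :
    Finset ℤ :=
  (Finset.univ.filter fun j : Fin m => lastIdx hd b j = i).image
    (fun j => round (-(Ssum b j prev i) / (b j i)))

def rhoAux (hd : 0 < d) (b : Fin m → EuclideanSpace ℝ (Fin d)) (n : Fin d → ℤ) (k : ℕ) : ℤ :=
  if hk : k < d then
    skipf
      (Bad hd b (fun i' : Fin d => if _h : i'.val < k then rhoAux hd b n i'.val else 0) ⟨k, hk⟩)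
      (n ⟨k, hk⟩)
  else 0
termination_by k
decreasing_by exact _h

end Stmt17

namespace Stmt17
variable {d m : ℕ}

lemma rhoAux_eq (hd : 0 < d) (b : Fin m → EuclideanSpace ℝ (Fin d)) (n : Fin d → ℤ)
    {k : ℕ} (hk : k < d) :
    rhoAux hd b n k =
      skipf
        (Bad hd b (fun i' : Fin d => if _h : i'.val < k then rhoAux hd b n i'.val else 0) ⟨k, hk⟩)
        (n ⟨k, hk⟩) := by
  rw [rhoAux]
  simp [hk]

lemma rhoAux_congr (hd : 0 < d) (b : Fin m → EuclideanSpace ℝ (Fin d)) (n n' : Fin d → ℤ)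
    (k : ℕ) (hag : ∀ j : Fin d, j.val ≤ k → n j = n' j) :
    rhoAux hd b n k = rhoAux hd b n' k := by
  induction k using Nat.strong_induction_on with
  | _ k ih =>
    by_cases hk : k < d
    · rw [rhoAux_eq hd b n hk, rhoAux_eq hd b n' hk]
      have hprev : (fun i' : Fin d => if _h : i'.val < k then rhoAux hd b n i'.val else 0)
          = (fun i' : Fin d => if _h : i'.val < k then rhoAux hd b n' i'.val else 0) := by
        funext i'
        by_cases h : i'.val < k
        · simp only [dif_pos h]
          exact ih i'.val h (fun j hj => hag j (le_of_lt (lt_of_le_of_lt hj h)))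
        · simp only [dif_neg h]
      rw [hprev, hag ⟨k, hk⟩ (le_refl _)]
    · rw [rhoAux, rhoAux]; simp [hk]

end Stmt17

namespace Stmt17
variable {d m : ℕ}

lemma Bad_card_le (hd : 0 < d) (b : Fin m → EuclideanSpace ℝ (Fin d)) (prev : Fin d → ℤ)
    (i : Fin d) : (Bad hd b prev i).card ≤ m := by
  unfold Bad
  calc _ ≤ (Finset.univ.filter fun j : Fin m => lastIdx hd b j = i).card :=
        Finset.card_image_le
    _ ≤ (Finset.univ : Finset (Fin m)).card := Finset.card_le_card (Finset.filter_subset _ _)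
    _ = m := Finset.card_univ.trans (Fintype.card_fin m)

lemma rhoAux_bound (hd : 0 < d) (b : Fin m → EuclideanSpace ℝ (Fin d)) (n : Fin d → ℤ)
    {k : ℕ} (hk : k < d) : |rhoAux hd b n k - n ⟨k, hk⟩| ≤ (m : ℤ) := by
  rw [rhoAux_eq hd b n hk, skipf_def]
  set B := Bad hd b (fun i' : Fin d => if _h : i'.val < k then rhoAux hd b n i'.val else 0) ⟨k, hk⟩
  have h1 := shf_nonneg B (n ⟨k, hk⟩)
  have h2 := shf_le_card B (n ⟨k, hk⟩)
  have h3 : (B.card : ℤ) ≤ (m : ℤ) := by exact_mod_cast Bad_card_le hd b _ _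
  rw [abs_le]
  constructor <;> omega

lemma rhoAux_mono (hd : 0 < d) (b : Fin m → EuclideanSpace ℝ (Fin d)) (n : Fin d → ℤ)
    (i : Fin d) {a a' : ℤ} (h : a < a') :
    rhoAux hd b (Function.update n i a) i.val < rhoAux hd b (Function.update n i a') i.val := by
  have hk : i.val < d := i.isLt
  rw [rhoAux_eq hd b _ hk, rhoAux_eq hd b _ hk]
  have hieq : (⟨i.val, hk⟩ : Fin d) = i := rfl
  have hprev : ∀ c : ℤ,
      (fun i' : Fin d => if _h : i'.val < i.val then rhoAux hd b (Function.update n i c) i'.val else 0)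
      = (fun i' : Fin d => if _h : i'.val < i.val then rhoAux hd b n i'.val else 0) := by
    intro c
    funext i'
    by_cases h' : i'.val < i.val
    · simp only [dif_pos h']
      refine rhoAux_congr hd b _ _ _ (fun j hj => ?_)
      have : j ≠ i := by
        intro heq; subst heq; omega
      simp [Function.update_of_ne this]
    · simp only [dif_neg h']
  rw [hprev a, hprev a', hieq, Function.update_self, Function.update_self]
  exact skipf_strictMono _ h

end Stmt17

namespace Stmt17
variable {d m : ℕ}

lemma lastIdx_spec (hd : 0 < d) (b : Fin m → EuclideanSpace ℝ (Fin d)) (j : Fin m)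
    (hb0 : b j ≠ 0) :
    b j (lastIdx hd b j) ≠ 0 ∧ ∀ i : Fin d, lastIdx hd b j < i → b j i = 0 := by
  have hne : (Finset.univ.filter fun i => b j i ≠ 0).Nonempty := by
    by_contra hcon
    apply hb0
    rw [Finset.not_nonempty_iff_eq_empty, Finset.filter_eq_empty_iff] at hcon
    ext i
    simpa using hcon (Finset.mem_univ i)
  unfold lastIdx
  rw [dif_pos hne]
  constructor
  · have := Finset.max'_mem _ hne
    simpa using this
  · intro i hi
    by_contra hcon
    have : i ∈ Finset.univ.filter fun i => b j i ≠ 0 := by simpa using hcon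
    exact absurd (Finset.le_max' _ _ this) (not_le.mpr hi)

lemma int_ne_round_bound (x : ℤ) (t : ℝ) (h : x ≠ round t) : (1 : ℝ) / 2 ≤ |(x : ℝ) - t| := by
  have h1 : (1 : ℝ) ≤ |(x : ℝ) - (round t : ℝ)| := by
    have : (x : ℝ) - (round t : ℝ) = ((x - round t : ℤ) : ℝ) := by push_cast; ring
    rw [this]
    exact_mod_cast Int.one_le_abs (sub_ne_zero.mpr h)
  have h2 : |(round t : ℝ) - t| ≤ 1 / 2 := by rw [abs_sub_comm]; exact abs_sub_round t
  have h3 : |(x : ℝ) - (round t : ℝ)| ≤ |(x : ℝ) - t| + |(round t : ℝ) - t| := by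
    have := abs_sub_abs_le_abs_sub ((x:ℝ) - t) ((round t : ℝ) - t)
    calc |(x : ℝ) - (round t : ℝ)| = |((x:ℝ) - t) - ((round t : ℝ) - t)| := by ring_nf
      _ ≤ |(x : ℝ) - t| + |(round t : ℝ) - t| := abs_sub _ _
  linarith

lemma rhoAux_scalar (hd : 0 < d) (b : Fin m → EuclideanSpace ℝ (Fin d))
    (hb0 : ∀ j, b j ≠ 0) (hbcoord : ∀ j, ∀ i : Fin d, b j i = 0 ∨ 1 ≤ |b j i|)
    (n : Fin d → ℤ) (j : Fin m) :
    (1 : ℝ) / 2 ≤ |∑ i, b j i * (rhoAux hd b n i.val : ℝ)| := by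
  set L := lastIdx hd b j with hL
  obtain ⟨hL1, hL2⟩ := lastIdx_spec hd b j (hb0 j)
  have hbL : 1 ≤ |b j L| := (hbcoord j L).resolve_left hL1
  set prev : Fin d → ℤ := fun i' : Fin d => if _h : i'.val < L.val then rhoAux hd b n i'.val else 0
    with hprev
  set S := Ssum b j prev L with hS
  set x : ℤ := rhoAux hd b n L.val with hx
  -- the sum splits
  have hsplit : ∑ i, b j i * (rhoAux hd b n i.val : ℝ) = S + b j L * (x : ℝ) := by
    have h0 : ∑ i, b j i * (rhoAux hd b n i.val : ℝ)
        = ∑ i ∈ Finset.Iic L, b j i * (rhoAux hd b n i.val : ℝ) := by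
      refine (Finset.sum_subset (Finset.subset_univ _) ?_).symm
      intro i _ hi
      rw [Finset.mem_Iic] at hi
      rw [hL2 i (not_le.mp hi), zero_mul]
    rw [h0, ← Finset.Iio_insert, Finset.sum_insert (by simp)]
    rw [hS]
    unfold Ssum
    rw [add_comm]
    congr 1
    refine Finset.sum_congr rfl (fun i hi => ?_)
    rw [Finset.mem_Iio] at hi
    have : i.val < L.val := hi
    rw [hprev]
    simp only [dif_pos this]
  -- x avoids the bad set
  have hxBad : x ∉ Bad hd b prev L := by
    rw [hx, rhoAux_eq hd b n L.isLt]
    have : (⟨L.val, L.isLt⟩ : Fin d) = L := rfl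
    rw [this]
    exact skipf_not_mem _ _
  have hround : round (-S / (b j L)) ∈ Bad hd b prev L := by
    unfold Bad
    refine Finset.mem_image.mpr ⟨j, ?_, rfl⟩
    simp [hL]
  have hxne : x ≠ round (-S / (b j L)) := by
    intro heq; rw [heq] at hxBad; exact hxBad hround
  have hkey : (1 : ℝ) / 2 ≤ |(x : ℝ) - (-S / (b j L))| := int_ne_round_bound _ _ hxne
  rw [hsplit]
  have hbne : b j L ≠ 0 := hL1
  have : S + b j L * (x : ℝ) = b j L * ((x : ℝ) - (-S / (b j L))) := by
    field_simp
    ring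
  rw [this, abs_mul]
  calc (1:ℝ)/2 = 1 * (1/2) := by ring
    _ ≤ |b j L| * |(x : ℝ) - (-S / (b j L))| :=
      mul_le_mul hbL hkey (by norm_num) (le_trans (by norm_num) hbL)

end Stmt17

namespace Stmt17


/-- given `b^1,…,b^m ∈ ℝ^d ∖ {0}` whose coordinates are each either `0` or of
absolute value at least `1`, there is a triangular sequence `ρ^{(n)} ∈ ℤ^d ∖ {0}`, `n ∈ ℤ^d`
(the `i`-th coordinate depending only on `n₁,…,n_i` and increasing in `n_i`), with
`|ρ_i(n₁,…,n_i) − n_i| ≤ m` and `|⟨b^j, ρ^{(n)}⟩| ≥ 1/2` for all `n ∈ ℤ^d`, `j = 1,…,m`. -/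
theorem stmt17 (d m : ℕ) (hd : 0 < d) (hm : 0 < m)
    (b : Fin m → EuclideanSpace ℝ (Fin d))
    (hb0 : ∀ j, b j ≠ 0)
    (hbcoord : ∀ j, ∀ i : Fin d, b j i = 0 ∨ 1 ≤ |b j i|) :
    ∃ ρ : (Fin d → ℤ) → (Fin d → ℤ),
      -- values in `ℤ^d ∖ {0}`
      (∀ n, ρ n ≠ 0) ∧
      -- `ρ_i` depends only on `n₁, …, n_i`
      (∀ n n' : Fin d → ℤ, ∀ i : Fin d, (∀ j : Fin d, j ≤ i → n j = n' j) → ρ n i = ρ n' i) ∧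
      -- `ρ_i` is increasing in `n_i` for fixed `n₁, …, n_{i−1}`
      (∀ n : Fin d → ℤ, ∀ i : Fin d, ∀ a b : ℤ, a < b →
        ρ (Function.update n i a) i < ρ (Function.update n i b) i) ∧
      -- `|ρ_i(n₁,…,n_i) − n_i| ≤ m`
      (∀ n : Fin d → ℤ, ∀ i : Fin d, |ρ n i - n i| ≤ (m : ℤ)) ∧
      -- `|⟨b^j, ρ^{(n)}⟩| ≥ 1/2`
      (∀ n : Fin d → ℤ, ∀ j : Fin m, (1 : ℝ) / 2 ≤ |∑ i, b j i * (ρ n i : ℝ)|) := by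
  refine ⟨fun n i => rhoAux hd b n i.val, ?_, ?_, ?_, ?_, ?_⟩
  · intro n hcon
    have h := rhoAux_scalar hd b hb0 hbcoord n ⟨0, hm⟩
    have hz : ∀ i : Fin d, rhoAux hd b n i.val = 0 := fun i => congrFun hcon i
    rw [show |∑ i, b ⟨0, hm⟩ i * (rhoAux hd b n i.val : ℝ)| = 0 by
      rw [Finset.sum_eq_zero (fun i _ => by rw [hz i]; simp), abs_zero]] at h
    norm_num at h
  · intro n n' i hag
    exact rhoAux_congr hd b n n' i.val (fun j hj => hag j (Fin.le_def.mpr hj))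
  · intro n i a a' h
    exact rhoAux_mono hd b n i h
  · intro n i
    have := rhoAux_bound hd b n i.isLt
    simpa using this
  · intro n j
    exact rhoAux_scalar hd b hb0 hbcoord n j


end Stmt17
end
end

section
/- Let a = (a_1,…,a_d) with all a_i > 0, let m ∈ ℤ_{≥0} and α^1,…,α^m ∈ ℝ^d∖{0}. Then there exist a triangular sequence λ^{(n)}, n ∈ ℤ^d, and constants δ, L > 0 such that λ^{(n)} satisfies the separation condition Ω_sep[δ] and the close-lattice condition Ω_lat[a,L], and moreover |λ^{(n)}| ≥ δ and |⟨α^j, λ^{(n)}⟩| ≥ δ for all n ∈ ℤ^d and j = 1,…,m. -/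
/-!
Take `λ_i(n) = π n_i / a_i + t_i` with shifts `t_i ∈ [0, ε]`, where `2ε ≤ π / a_i`: whatever the
shifts, this gives `Ω_sep[δ]` for `δ ≤ ε` and `Ω_lat[a, ε]`. Once `λ_1, …, λ_{i-1}` are fixed,
`⟨α, λ⟩` is, for every `α` whose last nonzero coordinate is the `i`-th, an affine function of
`λ_i` with slope `α_i`, so it is smaller than `δ` in absolute value only for `t_i` in an interval
of length `2δ / |α_i|`. For `δ` small these finitely many intervals cannot cover `[0, ε]`, and
choosing `t_i` outside them coordinate by coordinate yields a triangular sequence. The bound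
`|λ| ≥ δ` is the same condition for the extra vector `α = e_1`.
-/

open scoped NNReal ENNReal

noncomputable section

namespace Stmt18

/-- A triangular sequence: `λ^{(n)} = (λ₁(n₁), λ₂(n₁,n₂), …, λ_d(n₁,…,n_d))`, the `i`-th
coordinate depending only on `n₁,…,n_i` and increasing in `n_i` for fixed `n₁,…,n_{i−1}`. -/
def IsTriangular {d : ℕ} (lam : (Fin d → ℤ) → EuclideanSpace ℝ (Fin d)) : Prop :=
  (∀ n n' : Fin d → ℤ, ∀ i : Fin d, (∀ j : Fin d, j ≤ i → n j = n' j) → lam n i = lam n' i) ∧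
    (∀ n : Fin d → ℤ, ∀ i : Fin d, ∀ a b : ℤ, a < b →
      lam (Function.update n i a) i < lam (Function.update n i b) i)

/-- The separation condition `Ω_sep[δ]`. -/
def SepCond {d : ℕ} (δ : ℝ) (lam : (Fin d → ℤ) → EuclideanSpace ℝ (Fin d)) : Prop :=
  ∀ n : Fin d → ℤ, ∀ i : Fin d, lam n i + δ ≤ lam (Function.update n i (n i + 1)) i

/-- The close-lattice condition `Ω_lat[a,L]`. -/
def LatCond {d : ℕ} (a : Fin d → ℝ) (L : ℝ) (lam : (Fin d → ℤ) → EuclideanSpace ℝ (Fin d)) :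
    Prop :=
  ∀ n : Fin d → ℤ, ∀ i : Fin d, |lam n i - Real.pi * (n i : ℝ) / a i| ≤ L

open MeasureTheory

theorem exists_mem_Icc_forall_le_abs_sub {ι : Type*} (s : Finset ι) (c r : ι → ℝ) (b : ℝ)
    {ε : ℝ} (hr : ∀ k ∈ s, 0 ≤ r k) (hε : ∑ k ∈ s, 2 * r k < ε) :
    ∃ x ∈ Set.Icc b (b + ε), ∀ k ∈ s, r k ≤ |x - c k| := by
  have hsum : 0 ≤ ∑ k ∈ s, 2 * r k := Finset.sum_nonneg fun k hk => by linarith [hr k hk]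
  have hvol : volume (⋃ k ∈ s, Metric.ball (c k) (r k)) < volume (Set.Icc b (b + ε)) :=
    calc volume (⋃ k ∈ s, Metric.ball (c k) (r k))
        ≤ ∑ k ∈ s, volume (Metric.ball (c k) (r k)) := measure_biUnion_finset_le _ _
      _ = ENNReal.ofReal (∑ k ∈ s, 2 * r k) := by
        rw [ENNReal.ofReal_sum_of_nonneg fun k hk => by linarith [hr k hk]]
        simp only [Real.volume_ball]
      _ < volume (Set.Icc b (b + ε)) := by
        rw [Real.volume_Icc, add_sub_cancel_left]
        exact ENNReal.ofReal_lt_ofReal_iff'.mpr ⟨hε, by linarith⟩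
  obtain ⟨x, hx, hfar⟩ := Set.not_subset.mp fun h => (measure_mono h).not_gt hvol
  simp only [Set.mem_iUnion, Metric.mem_ball, Real.dist_eq, not_exists, not_lt] at hfar
  exact ⟨x, hx, hfar⟩

theorem exists_mem_Icc_forall_le_abs_mul_add {ι : Type*} (s : Finset ι) (u w : ι → ℝ) (b : ℝ)
    {δ ε : ℝ} (hu : ∀ k ∈ s, u k ≠ 0) (hδ : 0 ≤ δ) (hε : ∑ k ∈ s, 2 * (δ / |u k|) < ε) :
    ∃ x ∈ Set.Icc b (b + ε), ∀ k ∈ s, δ ≤ |u k * x + w k| := by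
  obtain ⟨x, hx, hfar⟩ := exists_mem_Icc_forall_le_abs_sub s (fun k => -w k / u k)
    (fun k => δ / |u k|) b (fun k _ => by positivity) hε
  refine ⟨x, hx, fun k hk => ?_⟩
  have hpos : 0 < |u k| := abs_pos.mpr (hu k hk)
  calc δ = |u k| * (δ / |u k|) := by field_simp
    _ ≤ |u k| * |x - -w k / u k| := by gcongr; exact hfar k hk
    _ = |u k * x + w k| := by
      rw [← abs_mul, mul_sub, mul_div_cancel₀ _ (hu k hk)]; ring_nf

theorem exists_last_ne_zero {ι M : Type*} [Fintype ι] [LinearOrder ι] [Zero M] {x : ι → M}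
    (hx : x ≠ 0) : ∃ i, x i ≠ 0 ∧ ∀ j, i < j → x j = 0 := by
  classical
  obtain ⟨i, hi⟩ := Function.ne_iff.mp hx
  obtain ⟨I, hI, hmax⟩ := Finset.exists_max_image (Finset.univ.filter (x · ≠ 0)) id ⟨i, by simpa⟩
  refine ⟨I, (Finset.mem_filter.mp hI).2, fun j hj => ?_⟩
  by_contra hne
  exact (hmax j (by simpa using hne)).not_gt hj

theorem inner_eq_mul_add_sum_Iio {ι : Type*} [Fintype ι] [LinearOrder ι]
    [LocallyFiniteOrderBot ι] (b u : EuclideanSpace ℝ ι) {I : ι} (hb : ∀ j, I < j → b j = 0) :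
    inner ℝ b u = b I * u I + ∑ j ∈ Finset.Iio I, b j * u j := by
  classical
  have hsupp : ∑ j, b j * u j = ∑ j ∈ Finset.Iic I, b j * u j :=
    (Finset.sum_subset (Finset.subset_univ _) fun j _ hj => by
      rw [hb j (not_le.mp (by simpa using hj)), zero_mul]).symm
  rw [← Finset.Iio_insert, Finset.sum_insert Finset.notMem_Iio_self] at hsupp
  simpa [PiLp.inner_apply, mul_comm] using hsupp

/-- Solves `v i = f i v` when `f i v` depends only on the `v j` with `j < i` (`triRec_eq`); the
entries `j ≥ i` are masked by `0`, which makes the recursion well founded. -/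
def triRec {d : ℕ} (f : Fin d → (Fin d → ℝ) → ℝ) (i : Fin d) : ℝ :=
  f i fun j => if j < i then triRec f j else 0
termination_by i

theorem triRec_eq {d : ℕ} {f : Fin d → (Fin d → ℝ) → ℝ}
    (hf : ∀ i v w, (∀ j < i, v j = w j) → f i v = f i w) (i : Fin d) :
    triRec f i = f i (triRec f) := by
  rw [triRec]
  exact hf i _ _ fun j hj => if_pos hj

theorem triRec_congr {d : ℕ} {f g : Fin d → (Fin d → ℝ) → ℝ} (i : Fin d)
    (h : ∀ j ≤ i, f j = g j) : triRec f i = triRec g i := by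
  induction i using WellFoundedLT.induction with
  | _ i ih =>
    rw [triRec, triRec, h i le_rfl]
    congr 1
    funext j
    split_ifs with hj
    · exact ih j hj fun k hk => h k (hk.trans hj.le)
    · rfl

section Windows

variable {d : ℕ} {a : Fin d → ℝ} {ε δ : ℝ} {lam : (Fin d → ℤ) → EuclideanSpace ℝ (Fin d)}

theorem SepCond.strictMono_update (hlam : SepCond δ lam) (hδ : 0 < δ) (n : Fin d → ℤ)
    (i : Fin d) : StrictMono fun k : ℤ => lam (Function.update n i k) i :=
  strictMono_int_of_lt_succ fun k => by
    have h := hlam (Function.update n i k) i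
    rw [Function.update_self, Function.update_idem] at h
    linarith

theorem sepCond_of_mem_Icc (hε : ∀ i, ε + δ ≤ Real.pi / a i)
    (hlam : ∀ n i, lam n i ∈ Set.Icc (Real.pi * n i / a i) (Real.pi * n i / a i + ε)) :
    SepCond δ lam := by
  intro n i
  have h₀ := (hlam n i).2
  have h₁ := (hlam (Function.update n i (n i + 1)) i).1
  rw [Function.update_self, Int.cast_add, Int.cast_one, mul_add_one, add_div] at h₁
  linarith [hε i]

theorem latCond_of_mem_Icc
    (hlam : ∀ n i, lam n i ∈ Set.Icc (Real.pi * n i / a i) (Real.pi * n i / a i + ε)) :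
    LatCond a ε lam := fun n i => by
  rw [abs_le]
  constructor <;> linarith [(hlam n i).1, (hlam n i).2]

end Windows

theorem exists_triangular_of_sum_lt {ι : Type*} [Fintype ι] {d : ℕ} {a : Fin d → ℝ} {ε δ : ℝ}
    (hδ : 0 < δ) (hε : ∀ i, ε + δ ≤ Real.pi / a i) (β : ι → EuclideanSpace ℝ (Fin d))
    (top : ι → Fin d) (htop : ∀ k, β k (top k) ≠ 0) (hzero : ∀ k j, top k < j → β k j = 0)
    (hsum : ∑ k, 2 * (δ / |β k (top k)|) < ε) :
    ∃ lam : (Fin d → ℤ) → EuclideanSpace ℝ (Fin d), IsTriangular lam ∧ SepCond δ lam ∧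
      LatCond a ε lam ∧ ∀ n k, δ ≤ |(inner ℝ (β k) (lam n) : ℝ)| := by
  have hstep (i : Fin d) (x₀ : ℝ) (w : ι → ℝ) : ∃ x ∈ Set.Icc x₀ (x₀ + ε),
      ∀ k ∈ Finset.univ.filter (top · = i), δ ≤ |β k (top k) * x + w k| :=
    exists_mem_Icc_forall_le_abs_mul_add _ _ w x₀ (fun k _ => htop k) hδ.le <|
      (Finset.sum_le_sum_of_subset_of_nonneg (Finset.filter_subset _ _)
        fun k _ _ => by positivity).trans_lt hsum
  choose pick hpick_mem hpick using hstep
  set f : (Fin d → ℤ) → Fin d → (Fin d → ℝ) → ℝ := fun n i v =>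
    pick i (Real.pi * n i / a i) fun k => ∑ j ∈ Finset.Iio i, β k j * v j
  set lam : (Fin d → ℤ) → EuclideanSpace ℝ (Fin d) := fun n => WithLp.toLp 2 (triRec (f n))
  have hlam (n : Fin d → ℤ) (i : Fin d) : lam n i = f n i (lam n) := by
    refine triRec_eq (fun i v w hvw => ?_) i
    simp only [f]
    congr 2 with k
    exact Finset.sum_congr rfl fun j hj => by rw [hvw j (Finset.mem_Iio.mp hj)]
  have hmem (n : Fin d → ℤ) (i : Fin d) :
      lam n i ∈ Set.Icc (Real.pi * n i / a i) (Real.pi * n i / a i + ε) :=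
    hlam n i ▸ hpick_mem _ _ _
  have hsep : SepCond δ lam := sepCond_of_mem_Icc hε hmem
  refine ⟨lam, ⟨fun n n' i h => triRec_congr i fun j hj => ?_, hsep.strictMono_update hδ⟩,
    hsep, latCond_of_mem_Icc hmem, fun n k => ?_⟩
  · simp only [f, h j hj]
  · rw [inner_eq_mul_add_sum_Iio _ _ (hzero k), hlam n (top k)]
    exact hpick _ _ _ k (by simp)

theorem exists_triangular_le_abs_inner {ι : Type*} [Fintype ι] {d : ℕ} (a : Fin d → ℝ)
    (ha : ∀ i, 0 < a i) (β : ι → EuclideanSpace ℝ (Fin d)) (hβ : ∀ k, β k ≠ 0) :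
    ∃ (lam : (Fin d → ℤ) → EuclideanSpace ℝ (Fin d)) (δ L : ℝ), 0 < δ ∧ 0 < L ∧
      IsTriangular lam ∧ SepCond δ lam ∧ LatCond a L lam ∧
      ∀ n k, δ ≤ |(inner ℝ (β k) (lam n) : ℝ)| := by
  choose top htop hzero using fun k =>
    exists_last_ne_zero (x := (β k).ofLp) fun h =>
      hβ k (WithLp.ofLp_injective 2 (by simpa using h))
  set S := ∑ k, |β k (top k)|⁻¹
  set ε := Real.pi / (2 * (1 + ∑ i, a i))
  set δ := ε / (2 * (1 + S))
  have hS : 0 ≤ S := by positivity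
  have ha_sum : 0 ≤ ∑ i, a i := Finset.sum_nonneg fun i _ => (ha i).le
  have hε : 0 < ε := by positivity
  have hδ : 0 < δ := by positivity
  have hδε : δ ≤ ε := div_le_self hε.le (by linarith)
  have hεa (i : Fin d) : ε + δ ≤ Real.pi / a i :=
    calc ε + δ ≤ 2 * ε := by linarith
      _ = Real.pi / (1 + ∑ i, a i) := by simp only [ε]; field_simp
      _ ≤ Real.pi / a i := by
        gcongr
        · exact ha i
        · linarith [Finset.single_le_sum (fun j _ => (ha j).le) (Finset.mem_univ i)]
  have hsum : ∑ k, 2 * (δ / |β k (top k)|) < ε :=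
    calc ∑ k, 2 * (δ / |β k (top k)|) = 2 * δ * S := by
          simp only [S, Finset.mul_sum, div_eq_mul_inv, mul_assoc]
      _ = ε * (S / (1 + S)) := by simp only [δ]; field_simp
      _ < ε := mul_lt_of_lt_one_right hε ((div_lt_one (by linarith)).mpr (by linarith))
  obtain ⟨lam, htri, hsep, hlat, hinner⟩ :=
    exists_triangular_of_sum_lt hδ hεa β top htop hzero hsum
  exact ⟨lam, δ, ε, hδ, hε, htri, hsep, hlat, hinner⟩

/-- for any `a` with `a_i > 0` and any `α^1,…,α^m ∈ ℝ^d ∖ {0}`, there exist a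
triangular sequence `λ^{(n)}` and constants `δ, L > 0` satisfying `Ω_sep[δ]`, `Ω_lat[a,L]`, and
`|λ^{(n)}| ≥ δ`, `|⟨α^j, λ^{(n)}⟩| ≥ δ` for all `n ∈ ℤ^d` and `j = 1,…,m`. -/
theorem stmt18 (d m : ℕ) (hd : 0 < d)
    (a : Fin d → ℝ) (ha : ∀ i, 0 < a i)
    (α : Fin m → EuclideanSpace ℝ (Fin d)) (hα : ∀ j, α j ≠ 0) :
    ∃ (lam : (Fin d → ℤ) → EuclideanSpace ℝ (Fin d)) (δ L : ℝ), 0 < δ ∧ 0 < L ∧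
      IsTriangular lam ∧ SepCond δ lam ∧ LatCond a L lam ∧
      (∀ n : Fin d → ℤ, δ ≤ ‖lam n‖) ∧
      (∀ n : Fin d → ℤ, ∀ j : Fin m, δ ≤ |(inner ℝ (α j) (lam n) : ℝ)|) := by
  set e : EuclideanSpace ℝ (Fin d) := EuclideanSpace.single ⟨0, hd⟩ 1
  obtain ⟨lam, δ, L, hδ, hL, htri, hsep, hlat, hinner⟩ :=
    exists_triangular_le_abs_inner a ha (fun o : Option (Fin m) => o.elim e α)
      (Option.rec (by simp [e]) hα)
  refine ⟨lam, δ, L, hδ, hL, htri, hsep, hlat, fun n => ?_, fun n j => hinner n (some j)⟩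
  calc δ ≤ |(inner ℝ e (lam n) : ℝ)| := hinner n none
    _ ≤ ‖e‖ * ‖lam n‖ := abs_real_inner_le_norm _ _
    _ = ‖lam n‖ := by simp [e]

end Stmt18
end
end
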